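/- Let w be a partial permutation with rank function r_w, essential set E(w), and row/column descent sets Desc_row(w), Desc_col(w). Say that N ∈ Mat_{m,n}(Z≥0) carries an antidiagonal (i.e., corresponds to a monomial NOT standard for the Schubert determinantal ideal) if there exist (p,q) ∈ E(w), t = r_w(p,q)+1, rows r_1 < … < r_t ≤ p, and columns c_1 < … < c_t ≤ q such that N_{r_s, c_{t+1−s}} ≥ 1 for all 1 ≤ s ≤ t. Then: (1) if N carries an antidiagonal and e_i^row(N) ≠ ∅, then e_i^row(N) carries an antidiagonal, for every i; (2) if N carries an antidiagonal, i ∉ Desc_row(w), and f_i^row(N) ≠ ∅, then f_i^row(N) carries an antidiagonal; and symmetrically (3) e_j^col(N) carries an antidiagonal whenever it is not ∅, for every j, and (4) f_j^col(N) carries an antidiagonal whenever j ∉ Desc_col(w) and it is not ∅. -/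

import Mathlib

namespace FilteredRSK

/-! ## Words and crystal operators (via parenthesis matching) -/

/-- Scan the word `w`, treating each letter `i` as a `)` and each letter `i+1` as a `(`,
matching parentheses in the usual way.  Returns the pair consisting of the list of positions
of unmatched `)` (rightmost first) and the stack of positions of unmatched `(`
(most recent first, so the leftmost unmatched `(` is the last entry). -/
def bracketScan (i : ℕ) (w : List ℕ) : List ℕ × List ℕ :=
  (w.zipIdx.map Prod.swap).foldl
    (fun (st : List ℕ × List ℕ) (p : ℕ × ℕ) =>
      if p.2 = i + 1 then (st.1, p.1 :: st.2)
      else if p.2 = i then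
        match st.2 with
        | [] => (p.1 :: st.1, [])
        | _ :: rest => (st.1, rest)
      else st)
    ([], [])

/-- Position of the rightmost unmatched `)` of `bracket_i(w)`, if any. -/
def fPos (i : ℕ) (w : List ℕ) : Option ℕ := (bracketScan i w).1.head?

/-- Position of the leftmost unmatched `(` of `bracket_i(w)`, if any. -/
def ePos (i : ℕ) (w : List ℕ) : Option ℕ := (bracketScan i w).2.getLast?

/-- The crystal lowering operator `f_i`: change the letter `i` at the rightmost unmatched `)`
to `i+1`; output `∅` (i.e. `none`) if there is no unmatched `)`. -/
def fWord (i : ℕ) (w : List ℕ) : Option (List ℕ) := (fPos i w).map fun p => w.set p (i + 1)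

/-- The crystal raising operator `e_i`: change the letter `i+1` at the leftmost unmatched `(`
to `i`; output `∅` (i.e. `none`) if there is no unmatched `(`. -/
def eWord (i : ℕ) (w : List ℕ) : Option (List ℕ) := (ePos i w).map fun p => w.set p i

/-! ## Tableaux -/

/-- A tableau is a list of rows (top to bottom).  Its column reading word reads each column
bottom-to-top, columns left to right. -/
def readingWord (T : List (List ℕ)) : List ℕ :=
  (List.range (T.headD []).length).flatMap fun j => (T.filterMap fun row => row[j]?).reverse

/-- Semistandardness: all rows nonempty, rows weakly increase, row lengths weakly decrease,
and columns strictly increase. -/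
def IsSSYT (T : List (List ℕ)) : Prop :=
  (∀ row ∈ T, row ≠ []) ∧
  (∀ row ∈ T, row.Chain' (· ≤ ·)) ∧
  T.Chain' (fun row row' => row'.length ≤ row.length ∧
    ∀ j < row'.length, row.getD j 0 < row'.getD j 0)

/-- All entries of the tableau `T` lie in the interval `[a, b]`. -/
def entriesIn (T : List (List ℕ)) (a b : ℕ) : Prop := ∀ row ∈ T, ∀ x ∈ row, a ≤ x ∧ x ≤ b

/-- The shape of a tableau: the list of its row lengths. -/
def shape (T : List (List ℕ)) : List ℕ := T.map List.length

/-- A partition: a weakly decreasing list of positive integers. -/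
def IsPartition (lam : List ℕ) : Prop :=
  lam.Chain' (fun x y => y ≤ x) ∧ ∀ x ∈ lam, 0 < x

/-- Row insertion of `x` into a single row: replace the first entry strictly larger than `x`
(and bump it out), or append `x` at the end. -/
def insertRow (row : List ℕ) (x : ℕ) : List ℕ × Option ℕ :=
  match row.findIdx? (fun y => decide (x < y)) with
  | none => (row ++ [x], none)
  | some k => (row.set k x, row[k]?)

/-- Row insertion of a letter into a tableau. -/
def insertTab : List (List ℕ) → ℕ → List (List ℕ)
  | [], x => [[x]]
  | row :: rest, x =>
    match insertRow row x with
    | (row', none) => row' :: rest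
    | (row', some y) => row' :: insertTab rest y

/-- The insertion tableau of a word, obtained by successive row insertion of its letters. -/
def tabOf (w : List ℕ) : List (List ℕ) := w.foldl insertTab []

/-- The highest-weight tableau of shape `lam` with entries from `[a, b]`:
row `i` (0-indexed) is constantly filled with `a + i`. -/
def highestTab (lam : List ℕ) (a : ℕ) : List (List ℕ) :=
  lam.mapIdx fun i len => List.replicate len (a + i)

/-! ## Knuth equivalence -/

/-- Elementary Knuth moves. -/
inductive KnuthStep : List ℕ → List ℕ → Prop
  | yzx (u v : List ℕ) (x y z : ℕ) (h1 : x < y) (h2 : y ≤ z) :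
      KnuthStep (u ++ y :: z :: x :: v) (u ++ y :: x :: z :: v)
  | zxy (u v : List ℕ) (x y z : ℕ) (h1 : x ≤ y) (h2 : y < z) :
      KnuthStep (u ++ z :: x :: y :: v) (u ++ x :: z :: y :: v)

/-- Knuth equivalence: the equivalence relation generated by elementary Knuth moves. -/
def KnuthEquiv : List ℕ → List ℕ → Prop := Relation.EqvGen KnuthStep

/-- The Knuth equivalence class of a word. -/
def KClass (w : List ℕ) : Set (List ℕ) := {v | KnuthEquiv w v}

open Classical in
/-- A representative of a (nonempty) set of words. -/
noncomputable def classRep (C : Set (List ℕ)) : List ℕ :=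
  if h : C.Nonempty then h.some else []

/-- The weight of a Knuth class, defined via a representative. -/
noncomputable def classWt (C : Set (List ℕ)) : Multiset ℕ := ↑(classRep C)

/-- The insertion tableau of a Knuth class (as the reading word of the tableau),
defined via a representative. -/
noncomputable def classTab (C : Set (List ℕ)) : List ℕ := readingWord (tabOf (classRep C))

/-! ## Pre-crystal graphs -/

/-- A pre-crystal graph: a directed graph with edge labels in `L` and
vertex weights in `W`, together with a distinguished set of vertices. -/
structure PCG (V : Type*) (L : Type*) (W : Type*) where
  verts : Set V
  wt : V → W
  E : L → V → V → Prop

namespace PCG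

variable {V V' L L' W W' : Type*}

/-- Underlying undirected adjacency between vertices. -/
def Adj (G : PCG V L W) (u v : V) : Prop :=
  u ∈ G.verts ∧ v ∈ G.verts ∧ ∃ l, G.E l u v ∨ G.E l v u

/-- `u` and `v` lie in the same connected component. -/
def Reach (G : PCG V L W) : V → V → Prop := Relation.ReflTransGen G.Adj

/-- The connected component of `v` in `G`, as a pre-crystal graph. -/
def comp (G : PCG V L W) (v : V) : PCG V L W where
  verts := {u | u ∈ G.verts ∧ G.Reach v u}
  wt := G.wt
  E := G.E

/-- A pre-crystal graph homomorphism (with weights translated along `ω`):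
a vertex map preserving weights and labelled edges. -/
def IsHomVia (G : PCG V L W) (H : PCG V' L W') (ω : W → W') (f : V → V') : Prop :=
  (∀ v ∈ G.verts, f v ∈ H.verts) ∧
  (∀ v ∈ G.verts, H.wt (f v) = ω (G.wt v)) ∧
  (∀ (l : L), ∀ u ∈ G.verts, ∀ v ∈ G.verts, G.E l u v → H.E l (f u) (f v))

/-- A local isomorphism of pre-crystal graphs: a homomorphism whose restriction to each
connected component of `G` is an isomorphism onto a connected component of `H`. -/
def IsLocalIsoVia (G : PCG V L W) (H : PCG V' L W') (ω : W → W') (f : V → V') : Prop :=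
  IsHomVia G H ω f ∧
  (∀ u ∈ G.verts, ∀ v ∈ G.verts, G.Reach u v → f u = f v → u = v) ∧
  (∀ u ∈ G.verts, ∀ v' ∈ H.verts, H.Reach (f u) v' → ∃ v ∈ G.verts, G.Reach u v ∧ f v = v') ∧
  (∀ (l : L), ∀ u ∈ G.verts, ∀ v ∈ G.verts, G.Reach u v → H.E l (f u) (f v) → G.E l u v)

/-- An isomorphism of pre-crystal graphs. -/
def IsIsoVia (G : PCG V L W) (H : PCG V' L W') (ω : W → W') (f : V → V') : Prop :=
  IsHomVia G H ω f ∧ Set.BijOn f G.verts H.verts ∧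
  (∀ (l : L), ∀ u ∈ G.verts, ∀ v ∈ G.verts, H.E l (f u) (f v) → G.E l u v)

/-- Two pre-crystal graphs are isomorphic (with weights identified along `ω`). -/
def IsomorphicVia (G : PCG V L W) (H : PCG V' L W') (ω : W → W') : Prop :=
  ∃ f, IsIsoVia G H ω f

/-- The Cartesian product of two pre-crystal graphs; edge labels form the disjoint union
of the two label sets, and weights are concatenated. -/
def prod (G : PCG V L W) (H : PCG V' L' W') : PCG (V × V') (L ⊕ L') (W × W') where
  verts := {p | p.1 ∈ G.verts ∧ p.2 ∈ H.verts}
  wt := fun p => (G.wt p.1, H.wt p.2)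
  E := fun l p q =>
    match l with
    | Sum.inl a => G.E a p.1 q.1 ∧ p.2 = q.2
    | Sum.inr b => H.E b p.2 q.2 ∧ p.1 = q.1

/-- The Cartesian product of a finite family of pre-crystal graphs sharing a common ambient
label set (with disjoint effective labels, as for crystals of words on disjoint intervals):
an edge labelled `l` acts in a single coordinate and fixes all others. -/
def pi {r : ℕ} (G : Fin r → PCG V L W) : PCG (Fin r → V) L (Fin r → W) where
  verts := {p | ∀ k, p k ∈ (G k).verts}
  wt := fun p k => (G k).wt (p k)
  E := fun l p q => ∃ k, (G k).E l (p k) (q k) ∧ ∀ k', k' ≠ k → p k' = q k'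

end PCG

/-! ## Word, tableau and Knuth crystal graphs -/

/-- The word crystal graph `W_{[a,b]}`: vertices are the words on the alphabet `[a,b]`,
the weight of a word is its multiset of letters (recording the number of occurrences of
each letter), and there is an edge `w →ᵢ v` iff `v = f_i(w)` (for `a ≤ i < b`). -/
def WordGraph (a b : ℕ) : PCG (List ℕ) ℕ (Multiset ℕ) where
  verts := {w | ∀ x ∈ w, a ≤ x ∧ x ≤ b}
  wt := fun w => ↑w
  E := fun i u v => a ≤ i ∧ i < b ∧ fWord i u = some v

/-- The disjoint union `⊕_λ B_{λ,[a,b]}` of all tableau crystal graphs with entries in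
`[a,b]`: the induced subgraph of `W_{[a,b]}` on reading words of semistandard tableaux. -/
def TabWordGraph (a b : ℕ) : PCG (List ℕ) ℕ (Multiset ℕ) where
  verts := {w | ∃ T, IsSSYT T ∧ entriesIn T a b ∧ readingWord T = w}
  wt := fun w => ↑w
  E := fun i u v => a ≤ i ∧ i < b ∧ fWord i u = some v

/-- The tableau crystal graph `B_{λ,[a,b]}`: the induced subgraph of `W_{[a,b]}` on the
reading words of semistandard tableaux of shape `λ` with entries in `[a,b]`. -/
def BGraph (lam : List ℕ) (a b : ℕ) : PCG (List ℕ) ℕ (Multiset ℕ) where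
  verts := {w | ∃ T, IsSSYT T ∧ shape T = lam ∧ entriesIn T a b ∧ readingWord T = w}
  wt := fun w => ↑w
  E := fun i u v => a ≤ i ∧ i < b ∧ fWord i u = some v

/-- The Knuth crystal graph `K_{[a,b]}`: vertices are Knuth equivalence classes of words on
`[a,b]`, weights via representatives, with an edge `C →ᵢ C'` iff some representatives
`w ∈ C`, `w' ∈ C'` satisfy `w' = f_i(w)`. -/
noncomputable def KnuthGraph (a b : ℕ) : PCG (Set (List ℕ)) ℕ (Multiset ℕ) where
  verts := {C | ∃ w, (∀ x ∈ w, a ≤ x ∧ x ≤ b) ∧ C = KClass w}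
  wt := classWt
  E := fun i C C' => ∃ w ∈ C, ∃ w' ∈ C', a ≤ i ∧ i < b ∧ fWord i w = some w'

/-! ## Filtrations -/

/-- `ι` enumerates a filtration `0 = i₀ < i₁ < ⋯ < i_r = m` of `[0, m]`. -/
def IsFiltration (m : ℕ) {r : ℕ} (ι : Fin (r + 1) → ℕ) : Prop :=
  StrictMono ι ∧ ι 0 = 0 ∧ ι (Fin.last r) = m

/-- The subword of `w` consisting of all letters in the interval `[lo + 1, hi]`. -/
def blockFilter (lo hi : ℕ) (w : List ℕ) : List ℕ :=
  w.filter fun x => decide (lo + 1 ≤ x ∧ x ≤ hi)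

/-- The `I`-filtration of a word: the tuple of subwords on the letter intervals
`[i_{k-1}+1, i_k]`. -/
def filterWord {r : ℕ} (ι : Fin (r + 1) → ℕ) (w : List ℕ) : Fin r → List ℕ :=
  fun k => blockFilter (ι k.castSucc) (ι k.succ) w

/-- The canonical splitting of a weight (a multiset of letters) along the intervals of a
filtration. -/
def splitWt {r : ℕ} (ι : Fin (r + 1) → ℕ) (s : Multiset ℕ) : Fin r → Multiset ℕ :=
  fun k => s.filter fun x => ι k.castSucc + 1 ≤ x ∧ x ≤ ι k.succ

/-- The `I`-filtered word crystal graph `W^I_m`: the subgraph of `W_m = W_{[1,m]}` obtained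
by deleting all edges labelled by elements of `I`. -/
def FilteredWordGraph (m : ℕ) (I : Set ℕ) : PCG (List ℕ) ℕ (Multiset ℕ) where
  verts := {w | ∀ x ∈ w, 1 ≤ x ∧ x ≤ m}
  wt := fun w => ↑w
  E := fun i u v => i ∉ I ∧ 1 ≤ i ∧ i < m ∧ fWord i u = some v

/-- The `I`-filtered Knuth crystal graph `K^I_m`: the quotient of `W^I_m` by Knuth
equivalence. -/
noncomputable def FilteredKnuthGraph (m : ℕ) (I : Set ℕ) :
    PCG (Set (List ℕ)) ℕ (Multiset ℕ) where
  verts := {C | ∃ w, (∀ x ∈ w, 1 ≤ x ∧ x ≤ m) ∧ C = KClass w}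
  wt := classWt
  E := fun i C C' => i ∉ I ∧ ∃ w ∈ C, ∃ w' ∈ C', 1 ≤ i ∧ i < m ∧ fWord i w = some w'

/-- The product `W_{[1,i₁]} □ W_{[i₁+1,i₂]} □ ⋯ □ W_{[i_{r-1}+1,m]}`. -/
def WordPiGraph {r : ℕ} (ι : Fin (r + 1) → ℕ) :
    PCG (Fin r → List ℕ) ℕ (Fin r → Multiset ℕ) :=
  PCG.pi fun k => WordGraph (ι k.castSucc + 1) (ι k.succ)

/-- The product `K_{[1,i₁]} □ K_{[i₁+1,i₂]} □ ⋯ □ K_{[i_{r-1}+1,m]}`. -/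
noncomputable def KnuthPiGraph {r : ℕ} (ι : Fin (r + 1) → ℕ) :
    PCG (Fin r → Set (List ℕ)) ℕ (Fin r → Multiset ℕ) :=
  PCG.pi fun k => KnuthGraph (ι k.castSucc + 1) (ι k.succ)

/-- The disjoint union, over all `I`-filtered partition-tuples `λ`, of the filtered tableau
crystal graphs `B_{λ,m} = B_{λ⁽¹⁾,[1,i₁]} □ ⋯ □ B_{λ⁽ʳ⁾,[i_{r-1}+1,m]}`. -/
def TabPiGraph {r : ℕ} (ι : Fin (r + 1) → ℕ) :
    PCG (Fin r → List ℕ) ℕ (Fin r → Multiset ℕ) :=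
  PCG.pi fun k => TabWordGraph (ι k.castSucc + 1) (ι k.succ)

/-- The `I`-filtered tableau crystal graph `B_{λ,m}` of shape-tuple `λ`. -/
def BPiGraph {r : ℕ} (ι : Fin (r + 1) → ℕ) (lam : Fin r → List ℕ) :
    PCG (Fin r → List ℕ) ℕ (Fin r → Multiset ℕ) :=
  PCG.pi fun k => BGraph (lam k) (ι k.castSucc + 1) (ι k.succ)

/-- The map on Knuth classes induced by the `I`-filtration (via a representative). -/
noncomputable def classFilter {r : ℕ} (ι : Fin (r + 1) → ℕ) (C : Set (List ℕ)) :
    Fin r → Set (List ℕ) :=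
  fun k => KClass (filterWord ι (classRep C) k)

/-- An `I`-filtered partition-tuple: each `λ⁽ᵏ⁾` is a partition with at most
`i_k - i_{k-1}` rows. -/
def IsFilteredShape {r : ℕ} (ι : Fin (r + 1) → ℕ) (lam : Fin r → List ℕ) : Prop :=
  ∀ k, IsPartition (lam k) ∧ (lam k).length ≤ ι k.succ - ι k.castSucc

/-- The highest-weight tableau-tuple of shape-tuple `λ`: its `k`-th component is the
highest-weight tableau of shape `λ⁽ᵏ⁾` with entries from `[i_{k-1}+1, i_k]`. -/
def highestTabs {r : ℕ} (ι : Fin (r + 1) → ℕ) (lam : Fin r → List ℕ) :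
    Fin r → List (List ℕ) :=
  fun k => highestTab (lam k) (ι k.castSucc + 1)

/-! ## Matrices, row/column words and bicrystal operators -/

/-- The row word of a nonnegative integer matrix: record `M i j` copies of the (1-based) row
index `i + 1` for each entry, reading columns top-to-bottom, left to right. -/
def rowWord {m n : ℕ} (M : Matrix (Fin m) (Fin n) ℕ) : List ℕ :=
  (List.finRange n).flatMap fun j => (List.finRange m).flatMap fun i =>
    List.replicate (M i j) ((i : ℕ) + 1)

/-- The column word: record `M i j` copies of the (1-based) column index `j + 1` for each
entry, reading rows left-to-right, top to bottom. -/
def colWord {m n : ℕ} (M : Matrix (Fin m) (Fin n) ℕ) : List ℕ :=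
  (List.finRange m).flatMap fun i => (List.finRange n).flatMap fun j =>
    List.replicate (M i j) ((j : ℕ) + 1)

/-- The list of matrix cells producing the successive letters of `rowWord M`. -/
def rowCells {m n : ℕ} (M : Matrix (Fin m) (Fin n) ℕ) : List (Fin m × Fin n) :=
  (List.finRange n).flatMap fun j => (List.finRange m).flatMap fun i =>
    List.replicate (M i j) (i, j)

/-- The list of matrix cells producing the successive letters of `colWord M`. -/
def colCells {m n : ℕ} (M : Matrix (Fin m) (Fin n) ℕ) : List (Fin m × Fin n) :=
  (List.finRange m).flatMap fun i => (List.finRange n).flatMap fun j =>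
    List.replicate (M i j) (i, j)

/-- Subtract `1` at the cell `c` and add `1` at the cell directly below. -/
def shiftDown {m n : ℕ} (M : Matrix (Fin m) (Fin n) ℕ) (c : Fin m × Fin n) :
    Matrix (Fin m) (Fin n) ℕ := fun a b =>
  if a = c.1 ∧ b = c.2 then M a b - 1
  else if (a : ℕ) = (c.1 : ℕ) + 1 ∧ b = c.2 then M a b + 1
  else M a b

/-- Subtract `1` at the cell `c` and add `1` at the cell directly above. -/
def shiftUp {m n : ℕ} (M : Matrix (Fin m) (Fin n) ℕ) (c : Fin m × Fin n) :
    Matrix (Fin m) (Fin n) ℕ := fun a b =>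
  if a = c.1 ∧ b = c.2 then M a b - 1
  else if (a : ℕ) + 1 = (c.1 : ℕ) ∧ b = c.2 then M a b + 1
  else M a b

/-- Subtract `1` at the cell `c` and add `1` at the cell directly to the right. -/
def shiftRight {m n : ℕ} (M : Matrix (Fin m) (Fin n) ℕ) (c : Fin m × Fin n) :
    Matrix (Fin m) (Fin n) ℕ := fun a b =>
  if a = c.1 ∧ b = c.2 then M a b - 1
  else if a = c.1 ∧ (b : ℕ) = (c.2 : ℕ) + 1 then M a b + 1
  else M a b

/-- Subtract `1` at the cell `c` and add `1` at the cell directly to the left. -/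
def shiftLeft {m n : ℕ} (M : Matrix (Fin m) (Fin n) ℕ) (c : Fin m × Fin n) :
    Matrix (Fin m) (Fin n) ℕ := fun a b =>
  if a = c.1 ∧ b = c.2 then M a b - 1
  else if a = c.1 ∧ (b : ℕ) + 1 = (c.2 : ℕ) then M a b + 1
  else M a b

/-- The row bicrystal lowering operator `f_i^row`, transporting `f_i` through `rowWord`. -/
def fRow {m n : ℕ} (i : ℕ) (M : Matrix (Fin m) (Fin n) ℕ) :
    Option (Matrix (Fin m) (Fin n) ℕ) :=
  (fPos i (rowWord M)).bind fun p => ((rowCells M)[p]?).map fun c => shiftDown M c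

/-- The row bicrystal raising operator `e_i^row`, transporting `e_i` through `rowWord`. -/
def eRow {m n : ℕ} (i : ℕ) (M : Matrix (Fin m) (Fin n) ℕ) :
    Option (Matrix (Fin m) (Fin n) ℕ) :=
  (ePos i (rowWord M)).bind fun p => ((rowCells M)[p]?).map fun c => shiftUp M c

/-- The column bicrystal lowering operator `f_j^col`, transporting `f_j` through `colWord`. -/
def fCol {m n : ℕ} (j : ℕ) (M : Matrix (Fin m) (Fin n) ℕ) :
    Option (Matrix (Fin m) (Fin n) ℕ) :=
  (fPos j (colWord M)).bind fun p => ((colCells M)[p]?).map fun c => shiftRight M c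

/-- The column bicrystal raising operator `e_j^col`, transporting `e_j` through `colWord`. -/
def eCol {m n : ℕ} (j : ℕ) (M : Matrix (Fin m) (Fin n) ℕ) :
    Option (Matrix (Fin m) (Fin n) ℕ) :=
  (ePos j (colWord M)).bind fun p => ((colCells M)[p]?).map fun c => shiftLeft M c

/-- The pre-crystal graph `M^row_{m,n}`: vertices are all matrices in `Mat_{m,n}(ℤ≥0)`,
weights are row-sums (the weight of the row word), edges `M →ᵢ f_i^row(M)`. -/
def MRowGraph (m n : ℕ) : PCG (Matrix (Fin m) (Fin n) ℕ) ℕ (Multiset ℕ) where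
  verts := Set.univ
  wt := fun M => ↑(rowWord M)
  E := fun i M M' => 1 ≤ i ∧ i < m ∧ fRow i M = some M'

/-- The pre-crystal graph `M^col_{m,n}`. -/
def MColGraph (m n : ℕ) : PCG (Matrix (Fin m) (Fin n) ℕ) ℕ (Multiset ℕ) where
  verts := Set.univ
  wt := fun M => ↑(colWord M)
  E := fun j M M' => 1 ≤ j ∧ j < n ∧ fCol j M = some M'

/-- The matrix bicrystal graph `M_{m,n}`, with edges labelled `i^row` (`Sum.inl i`) and
`j^col` (`Sum.inr j`), and weight the pair (row-sum tuple, column-sum tuple). -/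
def MatGraph (m n : ℕ) :
    PCG (Matrix (Fin m) (Fin n) ℕ) (ℕ ⊕ ℕ) (Multiset ℕ × Multiset ℕ) where
  verts := Set.univ
  wt := fun M => (↑(rowWord M), ↑(colWord M))
  E := fun l M M' =>
    match l with
    | Sum.inl i => 1 ≤ i ∧ i < m ∧ fRow i M = some M'
    | Sum.inr j => 1 ≤ j ∧ j < n ∧ fCol j M = some M'

/-- The `(I|J)`-filtered matrix bicrystal graph `M^{I|J}_{m,n}`: delete the edges labelled
`i^row` with `i ∈ I` and `j^col` with `j ∈ J`. -/
def FilteredMatGraph (m n : ℕ) (I J : Set ℕ) :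
    PCG (Matrix (Fin m) (Fin n) ℕ) (ℕ ⊕ ℕ) (Multiset ℕ × Multiset ℕ) where
  verts := Set.univ
  wt := fun M => (↑(rowWord M), ↑(colWord M))
  E := fun l M M' =>
    match l with
    | Sum.inl i => i ∉ I ∧ 1 ≤ i ∧ i < m ∧ fRow i M = some M'
    | Sum.inr j => j ∉ J ∧ 1 ≤ j ∧ j < n ∧ fCol j M = some M'

/-- `filterRSK_{I|J}` at the level of reading words: apply the insertion tableau map to each
component of the filtrations of the row and column words, recording reading words. -/
def filterRSKw {m n r s : ℕ} (ι : Fin (r + 1) → ℕ) (κ : Fin (s + 1) → ℕ)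
    (M : Matrix (Fin m) (Fin n) ℕ) : (Fin r → List ℕ) × (Fin s → List ℕ) :=
  (fun k => readingWord (tabOf (filterWord ι (rowWord M) k)),
   fun k => readingWord (tabOf (filterWord κ (colWord M) k)))

/-- `filterRSK_{I|J}` at the level of tableaux. -/
def filterRSKt {m n r s : ℕ} (ι : Fin (r + 1) → ℕ) (κ : Fin (s + 1) → ℕ)
    (M : Matrix (Fin m) (Fin n) ℕ) :
    (Fin r → List (List ℕ)) × (Fin s → List (List ℕ)) :=
  (fun k => tabOf (filterWord ι (rowWord M) k),
   fun k => tabOf (filterWord κ (colWord M) k))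

/-- A matrix is a highest-weight vertex of `M^{I|J}_{m,n}`:
`e_i^row(M) = ∅` for all `i ∉ I` and `e_j^col(M) = ∅` for all `j ∉ J`. -/
def MatHighest {m n : ℕ} (I J : Set ℕ) (M : Matrix (Fin m) (Fin n) ℕ) : Prop :=
  (∀ i, 1 ≤ i → i < m → i ∉ I → eRow i M = none) ∧
  (∀ j, 1 ≤ j → j < n → j ∉ J → eCol j M = none)

/-- A set of matrices is `(I|J)`-bicrystal closed if it is closed under the bicrystal
operators `e_i^row, f_i^row` (`i ∉ I`) and `e_j^col, f_j^col` (`j ∉ J`). -/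
def BicrystalClosed {m n : ℕ} (I J : Set ℕ) (S : Set (Matrix (Fin m) (Fin n) ℕ)) : Prop :=
  ∀ M ∈ S,
    (∀ i, 1 ≤ i → i < m → i ∉ I →
      (∀ N, fRow i M = some N → N ∈ S) ∧ (∀ N, eRow i M = some N → N ∈ S)) ∧
    (∀ j, 1 ≤ j → j < n → j ∉ J →
      (∀ N, fCol j M = some N → N ∈ S) ∧ (∀ N, eCol j M = some N → N ∈ S))

/-- The induced pre-crystal subgraph of `M^{I|J}_{m,n}` on a set `S` of matrices. -/
def inducedMatGraph (m n : ℕ) (I J : Set ℕ) (S : Set (Matrix (Fin m) (Fin n) ℕ)) :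
    PCG (Matrix (Fin m) (Fin n) ℕ) (ℕ ⊕ ℕ) (Multiset ℕ × Multiset ℕ) where
  verts := S
  wt := fun M => (↑(rowWord M), ↑(colWord M))
  E := (FilteredMatGraph m n I J).E

/-- The disjoint union, over the highest-weight matrices `M₀ ∈ S` (hence with multiplicity
`c_{λ|μ}` for each filtered partition-tuple `(λ|μ)`), of copies of `B_{λ,m} □ B_{μ,n}` where
`(λ|μ)` is the shape of `filterRSK_{I|J}(M₀)`. -/
def sumCopiesGraph {m n : ℕ} {r s : ℕ} (ι : Fin (r + 1) → ℕ) (κ : Fin (s + 1) → ℕ)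
    (S : Set (Matrix (Fin m) (Fin n) ℕ)) :
    PCG (Matrix (Fin m) (Fin n) ℕ × ((Fin r → List ℕ) × (Fin s → List ℕ))) (ℕ ⊕ ℕ)
      ((Fin r → Multiset ℕ) × (Fin s → Multiset ℕ)) where
  verts := {Mp | Mp.1 ∈ S ∧ MatHighest (Set.range ι) (Set.range κ) Mp.1 ∧
    ∃ lam mu, IsFilteredShape ι lam ∧ IsFilteredShape κ mu ∧
      filterRSKt ι κ Mp.1 = (highestTabs ι lam, highestTabs κ mu) ∧
      Mp.2 ∈ (PCG.prod (BPiGraph ι lam) (BPiGraph κ mu)).verts}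
  wt := fun Mp => (PCG.prod (TabPiGraph ι) (TabPiGraph κ)).wt Mp.2
  E := fun l Mp Mq =>
    Mp.1 = Mq.1 ∧ (PCG.prod (TabPiGraph ι) (TabPiGraph κ)).E l Mp.2 Mq.2

/-! ## 1-based matrix entries and shape vectors -/

/-- The `(i,j)` entry of `M` in 1-based coordinates, with the convention that entries outside
the matrix are `0`. -/
def ent {m n : ℕ} (M : Matrix (Fin m) (Fin n) ℕ) (i j : ℕ) : ℕ :=
  if h : 1 ≤ i ∧ i ≤ m ∧ 1 ≤ j ∧ j ≤ n then M ⟨i - 1, by omega⟩ ⟨j - 1, by omega⟩ else 0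

/-- The partition `(lam (lo+1), lam (lo+2), …, lam (lo+size))` with trailing zero parts
removed: the shape of the block of a filtered partition-tuple written as an integer vector. -/
def blockShape (lam : ℕ → ℕ) (lo size : ℕ) : List ℕ :=
  ((List.range size).map fun t => lam (lo + t + 1)).filter fun x => decide (0 < x)

/-- The highest-weight tableau-tuple of the filtered partition-tuple written as an integer
vector `lam : ℕ → ℕ` (1-based). -/
def highestFromVec {r : ℕ} (ι : Fin (r + 1) → ℕ) (lam : ℕ → ℕ) : Fin r → List (List ℕ) :=
  fun k => highestTab (blockShape lam (ι k.castSucc) (ι k.succ - ι k.castSucc))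
    (ι k.castSucc + 1)

/-! ## Partial permutations and matrix Schubert combinatorics -/

/-- A partial permutation: at most one `1` in each row and column; encoded as an injective
partial function from rows to columns (`none` encodes `∞`). -/
def IsPartialPerm {m n : ℕ} (w : Fin m → Option (Fin n)) : Prop :=
  ∀ a a' b, w a = some b → w a' = some b → a = a'

/-- The cell `(i, j)` lies in the Rothe diagram `D(w)`: it is not weakly below nor weakly
right of a dot of the partial permutation matrix. -/
def InD {m n : ℕ} (w : Fin m → Option (Fin n)) (i : Fin m) (j : Fin n) : Prop :=
  (∀ b, w i = some b → (j : ℕ) < (b : ℕ)) ∧ (∀ a, a ≤ i → w a ≠ some j)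

/-- The row descent positions of `w` (1-based): rows `i` such that the rightmost box of
`D(w)` in row `i` is strictly right of the rightmost box in row `i + 1`. -/
def DescRow {m n : ℕ} (w : Fin m → Option (Fin n)) : Set ℕ :=
  {i | ∃ (h1 : 1 ≤ i) (h2 : i < m), ∃ j : Fin n,
    InD w ⟨i - 1, by omega⟩ j ∧ ∀ j' : Fin n, InD w ⟨i, h2⟩ j' → (j' : ℕ) < (j : ℕ)}

/-- The column descent positions of `w` (1-based). -/
def DescCol {m n : ℕ} (w : Fin m → Option (Fin n)) : Set ℕ :=
  {j | ∃ (h1 : 1 ≤ j) (h2 : j < n), ∃ i : Fin m,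
    InD w i ⟨j - 1, by omega⟩ ∧ ∀ i' : Fin m, InD w i' ⟨j, h2⟩ → (i' : ℕ) < (i : ℕ)}

/-- The rank function `r_w(i,j)`: the rank of the northwest `i × j` submatrix of the partial
permutation matrix, i.e. the number of dots in that submatrix. -/
noncomputable def rankFn {m n : ℕ} (w : Fin m → Option (Fin n)) (i j : ℕ) : ℕ :=
  Set.ncard {a : Fin m | (a : ℕ) < i ∧ ∃ b : Fin n, w a = some b ∧ (b : ℕ) < j}

/-- The matrix Schubert variety `X_w ⊆ Mat_{m,n}(ℂ)`: matrices whose northwest `i × j`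
submatrices have rank at most `r_w(i,j)`. -/
def XSchubert {m n : ℕ} (w : Fin m → Option (Fin n)) : Set (Matrix (Fin m) (Fin n) ℂ) :=
  {A | ∀ (i : ℕ) (hi : i ≤ m) (j : ℕ) (hj : j ≤ n),
    (A.submatrix (Fin.castLE hi) (Fin.castLE hj)).rank ≤ rankFn w i j}

/-- `g` is block-diagonal with diagonal blocks of sizes `i₁ - i₀, …, i_r - i_{r-1}`. -/
def IsBlockDiag {m : ℕ} {r : ℕ} (ι : Fin (r + 1) → ℕ) (g : Matrix (Fin m) (Fin m) ℂ) :
    Prop :=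
  ∀ a b : Fin m,
    (¬ ∃ k : Fin r, ι k.castSucc ≤ (a : ℕ) ∧ (a : ℕ) < ι k.succ ∧
        ι k.castSucc ≤ (b : ℕ) ∧ (b : ℕ) < ι k.succ) → g a b = 0

/-- `(p, q)` (0-based) is a cell of the essential set `E(w)`. -/
def EssCell {m n : ℕ} (w : Fin m → Option (Fin n)) (p : Fin m) (q : Fin n) : Prop :=
  InD w p q ∧ (∀ hq : (q : ℕ) + 1 < n, ¬ InD w p ⟨(q : ℕ) + 1, hq⟩) ∧
    (∀ hp : (p : ℕ) + 1 < m, ¬ InD w ⟨(p : ℕ) + 1, hp⟩ q)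

/-- `N` carries an antidiagonal of some Fulton generator of the Schubert determinantal ideal
of `w`: there are an essential cell `(p,q)`, `t = r_w(p,q) + 1` rows `r₁ < ⋯ < r_t ≤ p` and
columns `c₁ < ⋯ < c_t ≤ q` with `N_{r_s, c_{t+1-s}} ≥ 1` for all `s`. -/
def CarriesAntidiag {m n : ℕ} (w : Fin m → Option (Fin n))
    (N : Matrix (Fin m) (Fin n) ℕ) : Prop :=
  ∃ (p : Fin m) (q : Fin n), EssCell w p q ∧
    ∃ (rr : Fin (rankFn w ((p : ℕ) + 1) ((q : ℕ) + 1) + 1) → Fin m)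
      (cc : Fin (rankFn w ((p : ℕ) + 1) ((q : ℕ) + 1) + 1) → Fin n),
      StrictMono rr ∧ StrictMono cc ∧ (∀ t, rr t ≤ p) ∧ (∀ t, cc t ≤ q) ∧
      ∀ t, 1 ≤ N (rr t) (cc t.rev)

/-!
A row operator moves one unit of `N` to a vertically adjacent cell, and a column operator is a
row operator on the transpose, which maps antidiagonals to antidiagonals. If the unit leaves a
cell `c` of an antidiagonal, `c` is replaced by the cell receiving the unit, unless the
antidiagonal already uses that row. Then bracket matching supplies a replacement in the row of
`c`: for `e_i` the cell `c` carries the leftmost unmatched `(` of the row word, so the `)` of the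
antidiagonal's cell in the row above is matched by a `(` in between, i.e. by a further unit in
the row of `c` between the two columns (possibly a second unit at `c`); `f_i` is the mirror
image. The lowered unit leaves the rectangle of the essential cell `(p, q)` only if `i = p`, and
an essential cell in row `p` makes `p` a row descent.
-/

variable {m n : ℕ}

/-! ### Parenthesis matching -/

def LetterBetween (w : List ℕ) (x a b : ℕ) : Prop := ∃ q, a < q ∧ q < b ∧ w[q]? = some x

lemma LetterBetween.mono_right {w : List ℕ} {x a b b' : ℕ} (h : LetterBetween w x a b)
    (hb : b ≤ b') : LetterBetween w x a b' :=
  let ⟨q, h₁, h₂, h₃⟩ := h; ⟨q, h₁, by omega, h₃⟩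

def bracketStep (i : ℕ) (st : List ℕ × List ℕ) (p : ℕ × ℕ) : List ℕ × List ℕ :=
  if p.2 = i + 1 then (st.1, p.1 :: st.2)
  else if p.2 = i then
    match st.2 with
    | [] => (p.1 :: st.1, [])
    | _ :: rest => (st.1, rest)
  else st

lemma bracketScan_eq_foldl (i : ℕ) (w : List ℕ) :
    bracketScan i w = (w.zipIdx.map Prod.swap).foldl (bracketStep i) ([], []) := rfl

/-- The invariant of `bracketScan` after reading the first `k` letters of `w` into the state
`st = (unmatched ')', unmatched '(')`. -/
structure ScanInv (i : ℕ) (w : List ℕ) (k : ℕ) (st : List ℕ × List ℕ) : Prop where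
  open_pairwise : st.2.Pairwise (· > ·)
  open_lt : ∀ p ∈ st.2, p < k
  open_letter : ∀ p ∈ st.2, w[p]? = some (i + 1)
  open_spec : ∀ p ∈ st.2, ∀ q, p < q → q < k → w[q]? = some i →
    LetterBetween w (i + 1) p q
  close_letter : ∀ p ∈ st.1, w[p]? = some i
  close_spec : ∀ p ∈ st.1, ∀ q < p, w[q]? = some (i + 1) → LetterBetween w i q p
  matched : ∀ q < k, w[q]? = some (i + 1) → q ∈ st.2 ∨ LetterBetween w i q k

namespace ScanInv

variable {i k x : ℕ} {w : List ℕ} {st : List ℕ × List ℕ}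

lemma push (h : ScanInv i w k st) (hx : w[k]? = some (i + 1)) :
    ScanInv i w (k + 1) (st.1, k :: st.2) where
  open_pairwise := List.pairwise_cons.2 ⟨h.open_lt, h.open_pairwise⟩
  open_lt p hp := by
    rcases List.mem_cons.1 hp with rfl | hp
    · omega
    · exact (h.open_lt p hp).trans k.lt_succ_self
  open_letter p hp := by
    rcases List.mem_cons.1 hp with rfl | hp
    exacts [hx, h.open_letter p hp]
  open_spec p hp q hpq hq hwq := by
    rcases List.mem_cons.1 hp with rfl | hp
    · omega
    · rcases Nat.lt_succ_iff_lt_or_eq.1 hq with hq | rfl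
      · exact h.open_spec p hp q hpq hq hwq
      · simp_all
  close_letter := h.close_letter
  close_spec := h.close_spec
  matched q hq hwq := by
    rcases Nat.lt_succ_iff_lt_or_eq.1 hq with hq | rfl
    · exact (h.matched q hq hwq).imp (List.mem_cons_of_mem _) (·.mono_right k.le_succ)
    · exact Or.inl List.mem_cons_self

lemma close_unmatched (h : ScanInv i w k st) (hx : w[k]? = some i) (hst : st.2 = []) :
    ScanInv i w (k + 1) (k :: st.1, []) where
  open_pairwise := List.Pairwise.nil
  open_lt := by simp
  open_letter := by simp
  open_spec := by simp
  close_letter p hp := by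
    rcases List.mem_cons.1 hp with rfl | hp
    exacts [hx, h.close_letter p hp]
  close_spec p hp q hqp hwq := by
    rcases List.mem_cons.1 hp with rfl | hp
    · simpa [hst] using h.matched q hqp hwq
    · exact h.close_spec p hp q hqp hwq
  matched q hq hwq := by
    rcases Nat.lt_succ_iff_lt_or_eq.1 hq with hq | rfl
    · simpa [hst] using (h.matched q hq hwq).imp id (·.mono_right k.le_succ)
    · simp_all

lemma pop (h : ScanInv i w k st) (hx : w[k]? = some i) {q₀ : ℕ} {rest : List ℕ}
    (hst : st.2 = q₀ :: rest) : ScanInv i w (k + 1) (st.1, rest) where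
  open_pairwise := (List.pairwise_cons.1 (hst ▸ h.open_pairwise)).2
  open_lt p hp := (h.open_lt p (by simp [hst, hp])).trans k.lt_succ_self
  open_letter p hp := h.open_letter p (by simp [hst, hp])
  open_spec p hp q hpq hq hwq := by
    rcases Nat.lt_succ_iff_lt_or_eq.1 hq with hq | rfl
    · exact h.open_spec p (by simp [hst, hp]) q hpq hq hwq
    · refine ⟨q₀, (List.pairwise_cons.1 (hst ▸ h.open_pairwise)).1 p hp,
        h.open_lt q₀ (by simp [hst]), h.open_letter q₀ (by simp [hst])⟩
  close_letter := h.close_letter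
  close_spec := h.close_spec
  matched q hq hwq := by
    rcases Nat.lt_succ_iff_lt_or_eq.1 hq with hq | rfl
    · rcases h.matched q hq hwq with hmem | hlet
      · rw [hst] at hmem
        rcases List.mem_cons.1 hmem with rfl | hmem
        · exact Or.inr ⟨k, hq, k.lt_succ_self, hx⟩
        · exact Or.inl hmem
      · exact Or.inr (hlet.mono_right k.le_succ)
    · simp_all

lemma skip (h : ScanInv i w k st) (hx : w[k]? = some x) (hxi : x ≠ i) (hxi' : x ≠ i + 1) :
    ScanInv i w (k + 1) st where
  open_pairwise := h.open_pairwise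
  open_lt p hp := (h.open_lt p hp).trans k.lt_succ_self
  open_letter := h.open_letter
  open_spec p hp q hpq hq hwq := by
    rcases Nat.lt_succ_iff_lt_or_eq.1 hq with hq | rfl
    · exact h.open_spec p hp q hpq hq hwq
    · simp_all
  close_letter := h.close_letter
  close_spec := h.close_spec
  matched q hq hwq := by
    rcases Nat.lt_succ_iff_lt_or_eq.1 hq with hq | rfl
    · exact (h.matched q hq hwq).imp id (·.mono_right k.le_succ)
    · simp_all

lemma step (h : ScanInv i w k st) (hx : w[k]? = some x) :
    ScanInv i w (k + 1) (bracketStep i st (k, x)) := by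
  unfold bracketStep
  split_ifs with h₁ h₂
  · exact h.push (h₁ ▸ hx)
  · split
    · exact h.close_unmatched (h₂ ▸ hx) ‹_›
    · exact h.pop (h₂ ▸ hx) ‹_›
  · exact h.skip hx h₂ h₁

end ScanInv

lemma scanInv_bracketScan (i : ℕ) (w : List ℕ) : ScanInv i w w.length (bracketScan i w) := by
  suffices ∀ k ≤ w.length,
      ScanInv i w k (((w.take k).zipIdx.map Prod.swap).foldl (bracketStep i) ([], [])) by
    simpa [bracketScan_eq_foldl] using this w.length le_rfl
  intro k hk
  induction k with
  | zero => exact ⟨.nil, by simp, by simp, by simp, by simp, by simp, by simp⟩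
  | succ k ih =>
    have hk' : k < w.length := hk
    rw [List.take_add_one, List.getElem?_eq_getElem hk', Option.toList_some, List.zipIdx_append,
      List.map_append, List.foldl_append, List.length_take_of_le hk'.le]
    simpa using (ih hk'.le).step (List.getElem?_eq_getElem hk')

lemma ePos_spec {i p : ℕ} {w : List ℕ} (h : ePos i w = some p) :
    w[p]? = some (i + 1) ∧ ∀ q, p < q → w[q]? = some i → LetterBetween w (i + 1) p q := by
  have hinv := scanInv_bracketScan i w
  have hp : p ∈ (bracketScan i w).2 := List.mem_of_getLast? h
  refine ⟨hinv.open_letter p hp, fun q hpq hwq => hinv.open_spec p hp q hpq ?_ hwq⟩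
  exact (List.getElem?_eq_some_iff.1 hwq).1

lemma fPos_spec {i p : ℕ} {w : List ℕ} (h : fPos i w = some p) :
    w[p]? = some i ∧ ∀ q < p, w[q]? = some (i + 1) → LetterBetween w i q p := by
  have hinv := scanInv_bracketScan i w
  have hp : p ∈ (bracketScan i w).1 := List.mem_of_mem_head? h
  exact ⟨hinv.close_letter p hp, hinv.close_spec p hp⟩

lemma two_le_count_of_getElem? {α : Type*} [DecidableEq α] {l : List α} {x : α} {p q : ℕ}
    (hpq : p ≠ q) (hp : l[p]? = some x) (hq : l[q]? = some x) : 2 ≤ l.count x := by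
  wlog hlt : p < q generalizing p q
  · exact this hpq.symm hq hp (by omega)
  obtain ⟨hp', rfl⟩ := List.getElem?_eq_some_iff.1 hp
  obtain ⟨hq', hpq'⟩ := List.getElem?_eq_some_iff.1 hq
  exact List.duplicate_iff_two_le_count.1 <|
    List.duplicate_iff_exists_distinct_get.2 ⟨⟨p, hp'⟩, ⟨q, hq'⟩, hlt, rfl, hpq'.symm⟩

section RowCells

variable (M : Matrix (Fin m) (Fin n) ℕ)

lemma rowWord_eq_map : rowWord M = (rowCells M).map fun c => (c.1 : ℕ) + 1 := by
  simp [rowWord, rowCells, List.map_flatMap]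

lemma mem_rowCells {c : Fin m × Fin n} : c ∈ rowCells M ↔ 0 < M c.1 c.2 := by
  simp [rowCells, Nat.pos_iff_ne_zero, Prod.ext_iff, and_comm]

lemma count_rowCells (c : Fin m × Fin n) : (rowCells M).count c = M c.1 c.2 := by
  simp [rowCells, List.count_flatMap, List.count_replicate, ← Fin.sum_univ_def, Prod.ext_iff,
    ite_and]

lemma rowCells_pairwise :
    (rowCells M).Pairwise fun c d => c.2 < d.2 ∨ c.2 = d.2 ∧ c.1 ≤ d.1 := by
  simp only [rowCells, List.pairwise_flatMap, List.pairwise_replicate, List.mem_flatMap,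
    List.mem_replicate]
  refine ⟨fun j _ => ⟨fun i _ => by simp, ?_⟩, ?_⟩
  · exact (List.pairwise_lt_finRange m).imp fun h x ⟨_, hx⟩ y ⟨_, hy⟩ =>
      hx ▸ hy ▸ Or.inr ⟨rfl, h.le⟩
  · exact (List.pairwise_lt_finRange n).imp fun h x ⟨_, _, _, hx⟩ y ⟨_, _, _, hy⟩ =>
      hx ▸ hy ▸ Or.inl h

variable {M}

lemma getElem?_rowWord_eq_some {p x : ℕ} :
    (rowWord M)[p]? = some x ↔ ∃ c, (rowCells M)[p]? = some c ∧ (c.1 : ℕ) + 1 = x := by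
  simp [rowWord_eq_map]

lemma rowCells_order {p q : ℕ} {c d : Fin m × Fin n} (hpq : p < q)
    (hc : (rowCells M)[p]? = some c) (hd : (rowCells M)[q]? = some d) :
    c.2 < d.2 ∨ c.2 = d.2 ∧ c.1 ≤ d.1 := by
  obtain ⟨hq, rfl⟩ := List.getElem?_eq_some_iff.1 hd
  obtain ⟨hp, rfl⟩ := List.getElem?_eq_some_iff.1 hc
  exact List.pairwise_iff_getElem.1 (rowCells_pairwise M) p q hp hq hpq

lemma lt_of_rowCells_snd_lt {p q : ℕ} {c d : Fin m × Fin n}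
    (hc : (rowCells M)[p]? = some c) (hd : (rowCells M)[q]? = some d) (h : c.2 < d.2) :
    p < q := by
  rcases lt_trichotomy p q with hpq | rfl | hqp
  · exact hpq
  · cases hc.symm.trans hd
    exact absurd h (lt_irrefl _)
  · have := rowCells_order hqp hd hc
    omega

lemma pos_of_rowCells_getElem?_ne {N' : Matrix (Fin m) (Fin n) ℕ} {p q : ℕ}
    {c e : Fin m × Fin n} (hself : N' c.1 c.2 = M c.1 c.2 - 1)
    (hle : ∀ d ≠ c, M d.1 d.2 ≤ N' d.1 d.2)
    (hc : (rowCells M)[p]? = some c) (he : (rowCells M)[q]? = some e) (hpq : p ≠ q) :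
    0 < N' e.1 e.2 := by
  by_cases hec : e = c
  · subst hec
    have : 2 ≤ M e.1 e.2 := by
      rw [← count_rowCells M e]
      convert two_le_count_of_getElem? hpq hc he
    omega
  · exact ((mem_rowCells M).1 (List.mem_of_getElem? he)).trans_le (hle e hec)

lemma rowCells_fst_of_ePos {i p : ℕ} {c : Fin m × Fin n} (hp : ePos i (rowWord M) = some p)
    (hc : (rowCells M)[p]? = some c) : (c.1 : ℕ) = i := by
  obtain ⟨c', hc', hc'i⟩ := getElem?_rowWord_eq_some.1 (ePos_spec hp).1
  cases hc.symm.trans hc'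
  omega

lemma rowCells_fst_of_fPos {i p : ℕ} {c : Fin m × Fin n} (hp : fPos i (rowWord M) = some p)
    (hc : (rowCells M)[p]? = some c) : (c.1 : ℕ) + 1 = i := by
  obtain ⟨c', hc', hc'i⟩ := getElem?_rowWord_eq_some.1 (fPos_spec hp).1
  cases hc.symm.trans hc'
  omega

/-- The `)` contributed by `d` is matched by a `(` between it and the leftmost unmatched `(`. -/
lemma exists_rowCells_of_ePos {i p : ℕ} {c d : Fin m × Fin n}
    (hp : ePos i (rowWord M) = some p) (hc : (rowCells M)[p]? = some c)
    (hd : 0 < M d.1 d.2) (hrow : (d.1 : ℕ) + 1 = c.1) (hcol : c.2 < d.2) :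
    ∃ q e, p < q ∧ (rowCells M)[q]? = some e ∧ e.1 = c.1 ∧ c.2 ≤ e.2 ∧ e.2 < d.2 := by
  have hci := rowCells_fst_of_ePos hp hc
  obtain ⟨r, hr⟩ := List.mem_iff_getElem?.1 ((mem_rowCells M).2 hd)
  have hpr := lt_of_rowCells_snd_lt hc hr hcol
  obtain ⟨q, hpq, hqr, hq⟩ :=
    (ePos_spec hp).2 r hpr (getElem?_rowWord_eq_some.2 ⟨d, hr, by omega⟩)
  obtain ⟨e, he, hei⟩ := getElem?_rowWord_eq_some.1 hq
  have hce := rowCells_order hpq hc he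
  have hed := rowCells_order hqr he hr
  exact ⟨q, e, hpq, he, Fin.ext (by omega), by omega, by omega⟩

/-- The `(` contributed by `d` is matched by a `)` between it and the rightmost unmatched `)`. -/
lemma exists_rowCells_of_fPos {i p : ℕ} {c d : Fin m × Fin n}
    (hp : fPos i (rowWord M) = some p) (hc : (rowCells M)[p]? = some c)
    (hd : 0 < M d.1 d.2) (hrow : (d.1 : ℕ) = c.1 + 1) (hcol : d.2 < c.2) :
    ∃ q e, q < p ∧ (rowCells M)[q]? = some e ∧ e.1 = c.1 ∧ d.2 < e.2 ∧ e.2 ≤ c.2 := by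
  have hci := rowCells_fst_of_fPos hp hc
  obtain ⟨r, hr⟩ := List.mem_iff_getElem?.1 ((mem_rowCells M).2 hd)
  have hrp := lt_of_rowCells_snd_lt hr hc hcol
  obtain ⟨q, hrq, hqp, hq⟩ :=
    (fPos_spec hp).2 r hrp (getElem?_rowWord_eq_some.2 ⟨d, hr, by omega⟩)
  obtain ⟨e, he, hei⟩ := getElem?_rowWord_eq_some.1 hq
  have hde := rowCells_order hrq hr he
  have hec := rowCells_order hqp he hc
  exact ⟨q, e, hqp, he, Fin.ext (by omega), by omega, by omega⟩

end RowCells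

section Shift

variable (M : Matrix (Fin m) (Fin n) ℕ) (c : Fin m × Fin n)

lemma shiftUp_self : shiftUp M c c.1 c.2 = M c.1 c.2 - 1 := by simp [shiftUp]

lemma shiftDown_self : shiftDown M c c.1 c.2 = M c.1 c.2 - 1 := by simp [shiftDown]

lemma le_shiftUp {d : Fin m × Fin n} (h : d ≠ c) : M d.1 d.2 ≤ shiftUp M c d.1 d.2 := by
  have : ¬(d.1 = c.1 ∧ d.2 = c.2) := fun h' => h (Prod.ext h'.1 h'.2)
  unfold shiftUp; split_ifs <;> omega

lemma le_shiftDown {d : Fin m × Fin n} (h : d ≠ c) : M d.1 d.2 ≤ shiftDown M c d.1 d.2 := by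
  have : ¬(d.1 = c.1 ∧ d.2 = c.2) := fun h' => h (Prod.ext h'.1 h'.2)
  unfold shiftDown; split_ifs <;> omega

lemma shiftUp_of_add_one_eq {a : Fin m} (ha : (a : ℕ) + 1 = c.1) :
    shiftUp M c a c.2 = M a c.2 + 1 := by
  have : a ≠ c.1 := fun h => by omega
  simp [shiftUp, this, ha]

lemma shiftDown_of_eq_add_one {a : Fin m} (ha : (a : ℕ) = c.1 + 1) :
    shiftDown M c a c.2 = M a c.2 + 1 := by
  have : a ≠ c.1 := fun h => by omega
  simp [shiftDown, this, ha]

end Shift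

/-! ### Antidiagonals -/

def AntidiagLT (c d : Fin m × Fin n) : Prop := c.1 < d.1 ∧ d.2 < c.2

/-- `cell` lists, from north-east to south-west, an antidiagonal of positive entries of `N`
in the north-west rectangle with corner `(P, Q)`. -/
structure IsAntidiag (N : Matrix (Fin m) (Fin n) ℕ) (P : Fin m) (Q : Fin n) {k : ℕ}
    (cell : Fin k → Fin m × Fin n) : Prop where
  lt : ∀ ⦃s t⦄, s < t → AntidiagLT (cell s) (cell t)
  le : ∀ t, (cell t).1 ≤ P ∧ (cell t).2 ≤ Q
  pos : ∀ t, 0 < N (cell t).1 (cell t).2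

def HasAntidiag (N : Matrix (Fin m) (Fin n) ℕ) (P : Fin m) (Q : Fin n) (k : ℕ) : Prop :=
  ∃ cell : Fin k → Fin m × Fin n, IsAntidiag N P Q cell

namespace IsAntidiag

variable {N N' : Matrix (Fin m) (Fin n) ℕ} {P : Fin m} {Q : Fin n} {k : ℕ}
  {cell : Fin k → Fin m × Fin n}

lemma injective (h : IsAntidiag N P Q cell) : Function.Injective cell :=
  Function.Injective.of_comp (f := Prod.fst) (StrictMono.injective fun _ _ hst => (h.lt hst).1)

lemma update (h : IsAntidiag N P Q cell) {s : Fin k} {c' : Fin m × Fin n}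
    (hbefore : ∀ t < s, AntidiagLT (cell t) c') (hafter : ∀ t, s < t → AntidiagLT c' (cell t))
    (hle : c'.1 ≤ P ∧ c'.2 ≤ Q) (hpos : 0 < N' c'.1 c'.2)
    (hN' : ∀ d ≠ cell s, N d.1 d.2 ≤ N' d.1 d.2) :
    IsAntidiag N' P Q (Function.update cell s c') where
  lt a b hab := by
    simp only [Function.update_apply]
    split_ifs with ha hb hb
    · exact absurd (ha.trans hb.symm ▸ hab) (lt_irrefl _)
    · exact hafter b (ha ▸ hab)
    · exact hbefore a (hb ▸ hab)
    · exact h.lt hab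
  le t := by
    simp only [Function.update_apply]
    split_ifs
    exacts [hle, h.le t]
  pos t := by
    simp only [Function.update_apply]
    split_ifs with ht
    · exact hpos
    · exact (h.pos t).trans_le (hN' _ (h.injective.ne ht))

lemma hasAntidiag_of_replace (hA : IsAntidiag N P Q cell) {c : Fin m × Fin n}
    (hle : ∀ d ≠ c, N d.1 d.2 ≤ N' d.1 d.2)
    (hreplace : ∀ s, cell s = c → ∃ c' : Fin m × Fin n,
      (∀ t < s, AntidiagLT (cell t) c') ∧ (∀ t, s < t → AntidiagLT c' (cell t)) ∧
      (c'.1 ≤ P ∧ c'.2 ≤ Q) ∧ 0 < N' c'.1 c'.2) :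
    HasAntidiag N' P Q k := by
  by_cases hc : ∃ s, cell s = c
  · obtain ⟨s, rfl⟩ := hc
    obtain ⟨c', hbefore, hafter, hle', hpos⟩ := hreplace s rfl
    exact ⟨_, hA.update hbefore hafter hle' hpos hle⟩
  · push Not at hc
    exact ⟨cell, hA.lt, hA.le, fun t => (hA.pos t).trans_le (hle _ (hc t))⟩

lemma hasAntidiag_shiftUp (hA : IsAntidiag N P Q cell) {i p : ℕ} {c : Fin m × Fin n}
    (hi : 1 ≤ i) (hp : ePos i (rowWord N) = some p) (hc : (rowCells N)[p]? = some c) :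
    HasAntidiag (shiftUp N c) P Q k := by
  have hci := rowCells_fst_of_ePos hp hc
  refine hA.hasAntidiag_of_replace (fun d => le_shiftUp N c) fun s hs => ?_
  subst hs
  by_cases hblock : ∃ t < s, ((cell t).1 : ℕ) + 1 = (cell s).1
  · -- the row above is used by the antidiagonal: stay in the row, further right
    obtain ⟨t₀, ht₀, hrow⟩ := hblock
    obtain ⟨q, e, hpq, he, he1, hse, het⟩ :=
      exists_rowCells_of_ePos hp hc (hA.pos t₀) hrow (hA.lt ht₀).2
    refine ⟨e, fun t ht => ?_, fun t ht => ?_,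
      ⟨he1 ▸ (hA.le s).1, het.le.trans (hA.le t₀).2⟩,
      pos_of_rowCells_getElem?_ne (shiftUp_self N _) (fun d => le_shiftUp N _) hc he hpq.ne⟩
    · obtain ⟨h₁, -⟩ := hA.lt ht
      rcases lt_trichotomy t t₀ with htt | rfl | htt
      · exact ⟨he1 ▸ h₁, het.trans (hA.lt htt).2⟩
      · exact ⟨he1 ▸ h₁, het⟩
      · have := (hA.lt htt).1
        omega
    · obtain ⟨h₁, h₂⟩ := hA.lt ht
      exact ⟨he1 ▸ h₁, h₂.trans_le hse⟩
  · push Not at hblock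
    obtain ⟨a, ha⟩ : ∃ a : Fin m, (a : ℕ) + 1 = (cell s).1 :=
      ⟨⟨i - 1, by omega⟩, by simp; omega⟩
    refine ⟨(a, (cell s).2), fun t ht => ?_, fun t ht => ?_, ⟨?_, (hA.le s).2⟩,
      by simp [shiftUp_of_add_one_eq N _ ha]⟩
    · obtain ⟨h₁, h₂⟩ := hA.lt ht
      have := hblock t ht
      exact ⟨by simp only; omega, h₂⟩
    · obtain ⟨h₁, h₂⟩ := hA.lt ht
      exact ⟨by simp only; omega, h₂⟩
    · have := (hA.le s).1
      simp only; omega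

lemma hasAntidiag_shiftDown (hA : IsAntidiag N P Q cell) {i p : ℕ} {c : Fin m × Fin n}
    (hi : i < m) (hP : (P : ℕ) + 1 ≠ i) (hp : fPos i (rowWord N) = some p)
    (hc : (rowCells N)[p]? = some c) :
    HasAntidiag (shiftDown N c) P Q k := by
  have hci := rowCells_fst_of_fPos hp hc
  refine hA.hasAntidiag_of_replace (fun d => le_shiftDown N c) fun s hs => ?_
  subst hs
  by_cases hblock : ∃ t, s < t ∧ ((cell t).1 : ℕ) = (cell s).1 + 1
  · -- the row below is used by the antidiagonal: stay in the row, further left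
    obtain ⟨t₀, ht₀, hrow⟩ := hblock
    obtain ⟨q, e, hqp, he, he1, hte, hes⟩ :=
      exists_rowCells_of_fPos hp hc (hA.pos t₀) hrow (hA.lt ht₀).2
    refine ⟨e, fun t ht => ?_, fun t ht => ?_, ⟨he1 ▸ (hA.le s).1, hes.trans (hA.le s).2⟩,
      pos_of_rowCells_getElem?_ne (shiftDown_self N _) (fun d => le_shiftDown N _) hc he
        hqp.ne'⟩
    · obtain ⟨h₁, h₂⟩ := hA.lt ht
      exact ⟨he1 ▸ h₁, hes.trans_lt h₂⟩
    · obtain ⟨h₁, -⟩ := hA.lt ht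
      rcases lt_trichotomy t t₀ with htt | rfl | htt
      · have := (hA.lt htt).1
        omega
      · exact ⟨he1 ▸ h₁, hte⟩
      · exact ⟨he1 ▸ h₁, (hA.lt htt).2.trans hte⟩
  · push Not at hblock
    obtain ⟨a, ha⟩ : ∃ a : Fin m, (a : ℕ) = (cell s).1 + 1 :=
      ⟨⟨i, hi⟩, by simp; omega⟩
    refine ⟨(a, (cell s).2), fun t ht => ?_, fun t ht => ?_, ⟨?_, (hA.le s).2⟩,
      by simp [shiftDown_of_eq_add_one N _ ha]⟩
    · obtain ⟨h₁, h₂⟩ := hA.lt ht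
      exact ⟨by simp only; omega, h₂⟩
    · obtain ⟨h₁, h₂⟩ := hA.lt ht
      have := hblock t ht
      exact ⟨by simp only; omega, h₂⟩
    · have := (hA.le s).1
      simp only; omega

end IsAntidiag

/-! ### Column operators via transposition -/

open scoped Matrix

section Transpose

variable (M : Matrix (Fin m) (Fin n) ℕ)

lemma colWord_eq_rowWord_transpose : colWord M = rowWord Mᵀ := rfl

lemma colCells_eq_map_swap : colCells M = (rowCells Mᵀ).map Prod.swap := by
  simp [colCells, rowCells, List.map_flatMap]

lemma shiftLeft_eq_transpose (c : Fin m × Fin n) : shiftLeft M c = (shiftUp Mᵀ c.swap)ᵀ := by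
  ext a b
  simp [shiftLeft, shiftUp, and_comm]

lemma shiftRight_eq_transpose (c : Fin m × Fin n) :
    shiftRight M c = (shiftDown Mᵀ c.swap)ᵀ := by
  ext a b
  simp [shiftRight, shiftDown, and_comm]

lemma eCol_eq_eRow_transpose (j : ℕ) : eCol j M = (eRow j Mᵀ).map Matrix.transpose := by
  simp [eCol, eRow, colWord_eq_rowWord_transpose, colCells_eq_map_swap, Option.map_bind,
    shiftLeft_eq_transpose, Function.comp_def]

lemma fCol_eq_fRow_transpose (j : ℕ) : fCol j M = (fRow j Mᵀ).map Matrix.transpose := by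
  simp [fCol, fRow, colWord_eq_rowWord_transpose, colCells_eq_map_swap, Option.map_bind,
    shiftRight_eq_transpose, Function.comp_def]

end Transpose

namespace HasAntidiag

variable {N N' : Matrix (Fin m) (Fin n) ℕ} {P : Fin m} {Q : Fin n} {k : ℕ}

lemma transpose (h : HasAntidiag N P Q k) : HasAntidiag Nᵀ Q P k :=
  let ⟨cell, hA⟩ := h
  ⟨fun t => (cell t.rev).swap,
    fun _ _ hst => ⟨(hA.lt (Fin.rev_lt_rev.2 hst)).2, (hA.lt (Fin.rev_lt_rev.2 hst)).1⟩,
    fun t => (hA.le t.rev).symm, fun t => hA.pos t.rev⟩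

lemma eRow {i : ℕ} (h : HasAntidiag N P Q k) (hi : 1 ≤ i) (he : eRow i N = some N') :
    HasAntidiag N' P Q k := by
  obtain ⟨p, hp, hmap⟩ := Option.bind_eq_some_iff.1 he
  obtain ⟨c, hc, rfl⟩ := Option.map_eq_some_iff.1 hmap
  obtain ⟨cell, hA⟩ := h
  exact hA.hasAntidiag_shiftUp hi hp hc

lemma fRow {i : ℕ} (h : HasAntidiag N P Q k) (hi : i < m) (hP : (P : ℕ) + 1 ≠ i)
    (hf : fRow i N = some N') : HasAntidiag N' P Q k := by
  obtain ⟨p, hp, hmap⟩ := Option.bind_eq_some_iff.1 hf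
  obtain ⟨c, hc, rfl⟩ := Option.map_eq_some_iff.1 hmap
  obtain ⟨cell, hA⟩ := h
  exact hA.hasAntidiag_shiftDown hi hP hp hc

lemma eCol {j : ℕ} (h : HasAntidiag N P Q k) (hj : 1 ≤ j) (he : eCol j N = some N') :
    HasAntidiag N' P Q k := by
  rw [eCol_eq_eRow_transpose] at he
  obtain ⟨M, hM, rfl⟩ := Option.map_eq_some_iff.1 he
  simpa using (h.transpose.eRow hj hM).transpose

lemma fCol {j : ℕ} (h : HasAntidiag N P Q k) (hj : j < n) (hQ : (Q : ℕ) + 1 ≠ j)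
    (hf : fCol j N = some N') : HasAntidiag N' P Q k := by
  rw [fCol_eq_fRow_transpose] at hf
  obtain ⟨M, hM, rfl⟩ := Option.map_eq_some_iff.1 hf
  simpa using (h.transpose.fRow hj hQ hM).transpose

end HasAntidiag

lemma carriesAntidiag_iff {w : Fin m → Option (Fin n)} {N : Matrix (Fin m) (Fin n) ℕ} :
    CarriesAntidiag w N ↔
      ∃ P Q, EssCell w P Q ∧
        HasAntidiag N P Q (rankFn w ((P : ℕ) + 1) ((Q : ℕ) + 1) + 1) := by
  constructor
  · rintro ⟨P, Q, hess, rr, cc, hrr, hcc, hrP, hcQ, hpos⟩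
    exact ⟨P, Q, hess, fun t => (rr t, cc t.rev),
      fun _ _ hst => ⟨hrr hst, hcc (Fin.rev_lt_rev.2 hst)⟩, fun t => ⟨hrP t, hcQ _⟩, hpos⟩
  · rintro ⟨P, Q, hess, cell, hA⟩
    exact ⟨P, Q, hess, fun t => (cell t).1, fun t => (cell t.rev).2,
      fun _ _ hst => (hA.lt hst).1, fun _ _ hst => (hA.lt (Fin.rev_lt_rev.2 hst)).2,
      fun t => (hA.le t).1, fun t => (hA.le _).2,
      fun t => by simp only [Fin.rev_rev]; exact hA.pos t⟩

/-! ### Descents at essential cells -/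

section Descent

variable {w : Fin m → Option (Fin n)}

lemma InD.of_succ_row {P a : Fin m} {Q j : Fin n} (hPQ : InD w P Q) (ha : (a : ℕ) = P + 1)
    (haj : InD w a j) (hQj : Q ≤ j) : InD w a Q := by
  refine ⟨fun b hb => hQj.trans_lt (haj.1 b hb), fun a' ha' hwa => ?_⟩
  rcases ha'.lt_or_eq with ha' | rfl
  · exact hPQ.2 a' (by omega) hwa
  · exact absurd (haj.1 Q hwa) (not_lt.2 hQj)

lemma InD.of_succ_col {P i : Fin m} {Q b : Fin n} (hPQ : InD w P Q) (hb : (b : ℕ) = Q + 1)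
    (hib : InD w i b) (hPi : P ≤ i) : InD w P b := by
  refine ⟨fun b' hb' => ?_, fun a ha => hib.2 a (ha.trans hPi)⟩
  have hQb' := hPQ.1 b' hb'
  have hne : b' ≠ b := by rintro rfl; exact hib.2 P hPi hb'
  omega

lemma descRow_of_essCell {P : Fin m} {Q : Fin n} (hess : EssCell w P Q) {i : ℕ} (hi : 1 ≤ i)
    (him : i < m) (hP : (P : ℕ) + 1 = i) : i ∈ DescRow w := by
  subst hP
  refine ⟨hi, him, Q, by simpa using hess.1, fun j hj => ?_⟩
  by_contra! hQj
  exact hess.2.2 him (InD.of_succ_row hess.1 rfl hj hQj)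

lemma descCol_of_essCell {P : Fin m} {Q : Fin n} (hess : EssCell w P Q) {j : ℕ} (hj : 1 ≤ j)
    (hjn : j < n) (hQ : (Q : ℕ) + 1 = j) : j ∈ DescCol w := by
  subst hQ
  refine ⟨hj, hjn, P, by simpa using hess.1, fun i hi => ?_⟩
  by_contra! hPi
  exact hess.2.1 hjn (InD.of_succ_col hess.1 rfl hi hPi)

end Descent

theorem antidiagonal_preserved_general (m n : ℕ) (w : Fin m → Option (Fin n))
    (N : Matrix (Fin m) (Fin n) ℕ)
    (hN : CarriesAntidiag w N) :
    (∀ i, 1 ≤ i → i < m → ∀ N', eRow i N = some N' → CarriesAntidiag w N') ∧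
    (∀ i, 1 ≤ i → i < m → i ∉ DescRow w →
      ∀ N', fRow i N = some N' → CarriesAntidiag w N') ∧
    (∀ j, 1 ≤ j → j < n → ∀ N', eCol j N = some N' → CarriesAntidiag w N') ∧
    (∀ j, 1 ≤ j → j < n → j ∉ DescCol w →
      ∀ N', fCol j N = some N' → CarriesAntidiag w N') := by
  obtain ⟨P, Q, hess, hA⟩ := carriesAntidiag_iff.1 hN
  refine ⟨fun i hi _ N' he => ?_, fun i hi him hdesc N' hf => ?_,
    fun j hj _ N' he => ?_, fun j hj hjn hdesc N' hf => ?_⟩ <;>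
    refine carriesAntidiag_iff.2 ⟨P, Q, hess, ?_⟩
  · exact hA.eRow hi he
  · exact hA.fRow him (fun hP => hdesc (descRow_of_essCell hess hi him hP)) hf
  · exact hA.eCol hj he
  · exact hA.fCol hjn (fun hQ => hdesc (descCol_of_essCell hess hj hjn hQ)) hf

/-- Carrying an antidiagonal (of a Fulton generator of the Schubert
determinantal ideal of `w`) is preserved by `e_i^row` (all `i`), by `f_i^row` for
`i ∉ Desc_row(w)`, by `e_j^col` (all `j`), and by `f_j^col` for `j ∉ Desc_col(w)`,
whenever the output is not `∅`. -/
theorem antidiagonal_preserved (m n : ℕ) (w : Fin m → Option (Fin n))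
    (hw : IsPartialPerm w) (N : Matrix (Fin m) (Fin n) ℕ)
    (hN : CarriesAntidiag w N) :
    (∀ i, 1 ≤ i → i < m → ∀ N', eRow i N = some N' → CarriesAntidiag w N') ∧
    (∀ i, 1 ≤ i → i < m → i ∉ DescRow w →
      ∀ N', fRow i N = some N' → CarriesAntidiag w N') ∧
    (∀ j, 1 ≤ j → j < n → ∀ N', eCol j N = some N' → CarriesAntidiag w N') ∧
    (∀ j, 1 ≤ j → j < n → j ∉ DescCol w →
      ∀ N', fCol j N = some N' → CarriesAntidiag w N') :=
  antidiagonal_preserved_general m n w N hN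

end FilteredRSK
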